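/- arXiv:1701.08252 — 7 statements merged into one kernel-verified Lean document; each statement's English description precedes it below -/
import Mathlib

section
/- Let q and M be positive integers and let r be a positive integer. For every r-coloring C of the positive integers, there exist positive integers k and d with k > Md such that all the numbers k + λd, for integers λ with |λ| ≤ M, together with the number q + d, receive the same color under C. -/
open Combinatorics

/-- Finitary van der Waerden with an explicit bound. -/
lemma finVdW (n r : ℕ) : ∃ N : ℕ, ∀ C : ℕ → Fin r, ∃ b a : ℕ, 0 < a ∧
    b + n * a ≤ N ∧ ∀ i ≤ n, C (b + i * a) = C b := by
  classical
  obtain ⟨ι, _inst, hι⟩ := Line.exists_mono_in_high_dimension (Fin (n + 1)) (Fin r)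
  refine ⟨Fintype.card ι * n, fun C => ?_⟩
  obtain ⟨l, c, hl⟩ := hι fun v => C (∑ i, (v i : ℕ))
  set s : Finset ι := Finset.univ.filter (fun i => l.idxFun i = none) with hs
  set b : ℕ := ∑ i ∈ sᶜ, ((l.idxFun i).map Fin.val).getD 0 with hb
  have key : ∀ x : Fin (n + 1), (∑ i, ((l.idxFun i).getD x : ℕ)) = b + (x : ℕ) * s.card := by
    intro x
    rw [← Finset.sum_add_sum_compl s]
    have h1 : ∑ i ∈ s, ((l.idxFun i).getD x : ℕ) = s.card * (x : ℕ) := by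
      have hcongr : ∀ i ∈ s, ((l.idxFun i).getD x : ℕ) = (x : ℕ) := by
        intro i hi
        rw [hs, Finset.mem_filter] at hi
        rw [hi.2]
        rfl
      rw [Finset.sum_congr rfl hcongr, Finset.sum_const, smul_eq_mul]
    have h2 : ∑ i ∈ sᶜ, ((l.idxFun i).getD x : ℕ) = b := by
      apply Finset.sum_congr rfl
      intro i hi
      rw [Finset.mem_compl] at hi
      have hne : l.idxFun i ≠ none := by simpa [hs] using hi
      obtain ⟨a, ha⟩ := Option.ne_none_iff_exists'.mp hne
      rw [ha]
      rfl
    rw [h1, h2]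
    ring
  have dpos : 0 < s.card := by
    obtain ⟨i, hi⟩ := l.proper
    exact Finset.card_pos.mpr ⟨i, by rw [hs, Finset.mem_filter]; exact ⟨Finset.mem_univ _, hi⟩⟩
  have hcb : C b = c := by
    have h0 := hl 0
    change C (∑ i, ((l.idxFun i).getD 0 : ℕ)) = c at h0
    rw [key 0] at h0
    simpa using h0
  refine ⟨b, s.card, dpos, ?_, ?_⟩
  · have hbb : b ≤ sᶜ.card * n := by
      rw [hb]
      calc ∑ i ∈ sᶜ, ((l.idxFun i).map Fin.val).getD 0 ≤ ∑ _i ∈ sᶜ, n := by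
            apply Finset.sum_le_sum
            intro i _
            cases h : l.idxFun i with
            | none => simp
            | some a => simpa [h] using Nat.lt_succ_iff.mp a.isLt
        _ = sᶜ.card * n := by rw [Finset.sum_const, smul_eq_mul]
    have hcc : s.card + sᶜ.card = Fintype.card ι := Finset.card_add_card_compl s
    nlinarith
  · intro i hi
    have hx : i < n + 1 := Nat.lt_succ_of_le hi
    have h2 := hl ⟨i, hx⟩
    change C (∑ j, ((l.idxFun j).getD ⟨i, hx⟩ : ℕ)) = c at h2
    rw [key ⟨i, hx⟩] at h2
    rw [hcb]
    exact h2

lemma toNat_helper (b a : ℕ) (m : ℤ) (hm : 0 ≤ m) :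
    ((b : ℤ) + m * a).toNat = b + m.toNat * a := by
  have h : (b : ℤ) + m * a = ((b + m.toNat * a : ℕ) : ℤ) := by
    push_cast [Int.toNat_of_nonneg hm]
    ring
  rw [h, Int.toNat_natCast]

lemma delColor {r : ℕ} (c x₀ : Fin (r + 1)) (hx₀ : x₀ ≠ c) :
    ∃ f : Fin (r + 1) → Fin r, ∀ x y, x ≠ c → y ≠ c → f x = f y → x = y := by
  have hr : 1 ≤ r := by
    by_contra h
    have hr0 : r = 0 := by omega
    subst hr0
    have h1 := x₀.isLt
    have h2 := c.isLt
    exact hx₀ (Fin.ext (by omega))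
  refine ⟨fun x => if h : x.val < c.val then ⟨x.val, h.trans_le (Nat.lt_succ_iff.mp c.isLt)⟩
    else ⟨x.val - 1, by have := x.isLt; omega⟩, ?_⟩
  intro x y hx hy hxy
  simp only at hxy
  have hx' : x.val ≠ c.val := fun h => hx (Fin.ext h)
  have hy' : y.val ≠ c.val := fun h => hy (Fin.ext h)
  have hxv : x.val < r + 1 := x.isLt
  have hyv : y.val < r + 1 := y.isLt
  apply Fin.ext
  split_ifs at hxy <;> simp only [Fin.mk.injEq] at hxy <;> omega

lemma keyP (r : ℕ) : ∀ q M : ℕ, 0 < M → ∃ N : ℕ, ∀ C : ℕ → Fin r, ∃ k d : ℕ,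
    0 < k ∧ 0 < d ∧ M * d < k ∧ k + M * d ≤ N ∧ d ≤ N ∧
    ∀ l : ℤ, |l| ≤ (M : ℤ) → C ((k : ℤ) + l * d).toNat = C (q + d) := by
  induction r with
  | zero => exact fun q M hM => ⟨0, fun C => (C 0).elim0⟩
  | succ r IH =>
    intro q M hM
    obtain ⟨N₀, hN₀⟩ := IH 0 M hM
    set s := max N₀ 1 with hs
    have hs1 : 1 ≤ s := le_max_right _ _
    obtain ⟨NV, hNV⟩ := finVdW (2 * M * s + 1) (r + 1)
    refine ⟨q + s * NV + NV, fun C => ?_⟩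
    obtain ⟨b, a, ha, hbound, hmono⟩ := hNV C
    have haNV : a ≤ NV :=
      le_trans (le_trans (Nat.le_mul_of_pos_left a (by omega)) (Nat.le_add_left _ b)) hbound
    by_cases hcase : ∃ j, 1 ≤ j ∧ j ≤ s ∧ C (q + j * a) = C b
    · obtain ⟨j, hj1, hjs, hjc⟩ := hcase
      have hMj : M * j ≤ M * s := Nat.mul_le_mul le_rfl hjs
      have hMja : M * j * a ≤ M * s * a := Nat.mul_le_mul_right a hMj
      refine ⟨b + (M * s + 1) * a, j * a,
        Nat.lt_of_lt_of_le (Nat.mul_pos (by omega) ha) (Nat.le_add_left _ _),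
        Nat.mul_pos (by omega) ha, ?_, ?_, ?_, ?_⟩
      · calc M * (j * a) = M * j * a := by ring
          _ ≤ M * s * a := hMja
          _ < (M * s + 1) * a := by nlinarith
          _ ≤ b + (M * s + 1) * a := Nat.le_add_left _ _
      · nlinarith [hbound]
      · have : j * a ≤ s * NV := Nat.mul_le_mul hjs haNV
        linarith
      · intro l hl
        set m : ℤ := (M * s + 1 : ℤ) + l * j with hm
        have e1 : -(M : ℤ) * j ≤ l * j :=
          mul_le_mul_of_nonneg_right (neg_le_of_abs_le hl) (by positivity)
        have e2 : l * (j : ℤ) ≤ (M : ℤ) * j :=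
          mul_le_mul_of_nonneg_right (le_of_abs_le hl) (by positivity)
        have e3 : (M : ℤ) * j ≤ (M : ℤ) * s := by exact_mod_cast hMj
        have hm1 : 1 ≤ m := by rw [hm]; push_cast; linarith
        have hm2 : m ≤ ((2 * M * s + 1 : ℕ) : ℤ) := by rw [hm]; push_cast; linarith
        have heq : ((b + (M * s + 1) * a : ℕ) : ℤ) + l * ((j * a : ℕ) : ℤ)
            = (b : ℤ) + m * a := by rw [hm]; push_cast; ring
        rw [heq, toNat_helper b a m (by linarith), hjc]
        exact hmono m.toNat (by omega)
    · push_neg at hcase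
      obtain ⟨f, hf⟩ := delColor (C b) (C (q + 1 * a)) (hcase 1 le_rfl hs1)
      obtain ⟨k', d', hk', hd', hMd', hkb, hdb, hcol⟩ :=
        hN₀ (fun j => f (C (q + j * a)))
      have hks : k' + M * d' ≤ s := le_trans hkb (le_max_left _ _)
      have hds : d' ≤ s := le_trans hdb (le_max_left _ _)
      have hprod : (k' + M * d') * a ≤ s * NV := Nat.mul_le_mul hks haNV
      refine ⟨q + k' * a, d' * a,
        Nat.lt_of_lt_of_le (Nat.mul_pos hk' ha) (Nat.le_add_left _ _),
        Nat.mul_pos hd' ha, ?_, ?_, ?_, ?_⟩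
      · have h1 : (M * d' + 1) * a ≤ k' * a := Nat.mul_le_mul_right a hMd'
        calc M * (d' * a) = M * d' * a := by ring
          _ < (M * d' + 1) * a := by nlinarith
          _ ≤ k' * a := h1
          _ ≤ q + k' * a := Nat.le_add_left _ _
      · nlinarith [hprod]
      · have : d' * a ≤ s * NV := Nat.mul_le_mul hds haNV
        linarith
      · intro l hl
        set m : ℤ := (k' : ℤ) + l * d' with hm
        have e1 : -(M : ℤ) * d' ≤ l * d' :=
          mul_le_mul_of_nonneg_right (neg_le_of_abs_le hl) (by positivity)
        have e2 : l * (d' : ℤ) ≤ (M : ℤ) * d' :=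
          mul_le_mul_of_nonneg_right (le_of_abs_le hl) (by positivity)
        have e3 : (M : ℤ) * d' < (k' : ℤ) := by exact_mod_cast hMd'
        have e4 : (k' : ℤ) + (M : ℤ) * d' ≤ (s : ℤ) := by exact_mod_cast hks
        have hm1 : 1 ≤ m := by rw [hm]; linarith
        have hm2 : m ≤ (s : ℤ) := by rw [hm]; linarith
        have h1 := hcol l hl
        simp only [zero_add] at h1
        have heq : ((q + k' * a : ℕ) : ℤ) + l * ((d' * a : ℕ) : ℤ)
            = (q : ℤ) + m * a := by rw [hm]; push_cast; ring
        rw [heq, toNat_helper q a m (by linarith)]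
        exact hf _ _ (hcase m.toNat (by omega) (by omega))
          (hcase d' hd' hds) h1



/-- Lemma 2.2: for positive integers `q, M` and any `r`-coloring of the positive
integers (modeled as `C : ℕ → Fin r`), there exist `k, d > 0` with `k > M*d` such
that all numbers `k + λ*d` for `|λ| ≤ M`, together with `q + d`, get the same color. -/
theorem lemma_two_two (q M r : ℕ) (hq : 0 < q) (hM : 0 < M) (hr : 0 < r)
    (C : ℕ → Fin r) :
    ∃ k d : ℕ, 0 < k ∧ 0 < d ∧ M * d < k ∧
      ∀ l : ℤ, |l| ≤ (M : ℤ) → C ((k : ℤ) + l * (d : ℤ)).toNat = C (q + d) := by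
  obtain ⟨N, hN⟩ := keyP r q M hM
  obtain ⟨k, d, h1, h2, h3, _, _, h6⟩ := hN C
  exact ⟨k, d, h1, h2, h3, h6⟩
end

section
/- Let n ≥ 1 and let a₁, …, aₙ be nonzero integers. Suppose there exists a prime p such that the p-adic valuations O_p(a₁), …, O_p(aₙ) are pairwise distinct modulo n (i.e., O_p(a_i) ≡ O_p(a_j) (mod n) implies i = j). Then the equation a₁x₁ + ⋯ + aₙxₙ = 0 is not n-regular; that is, there exists an n-coloring of the positive integers admitting no monochromatic solution (x₁,…,xₙ) in positive integers. -/
/-- A linear homogeneous equation `∑ aᵢ xᵢ = 0` (coefficients `a : Fin n → ℤ`) is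
`r`-regular if every `r`-coloring of the positive integers (modeled as `C : ℕ → Fin r`)
admits a monochromatic solution in positive integers. -/
def IsRegularEq (n : ℕ) (a : Fin n → ℤ) (r : ℕ) : Prop :=
  ∀ C : ℕ → Fin r, ∃ x : Fin n → ℕ, (∀ i, 0 < x i) ∧
    (∀ i j, C (x i) = C (x j)) ∧ (∑ i, a i * (x i : ℤ)) = 0

/-- Theorem 3.1: if there is a prime `p` such that the `p`-adic valuations of the
(nonzero) coefficients `a₁, …, aₙ` are pairwise distinct modulo `n`, then the
equation `a₁x₁ + ⋯ + aₙxₙ = 0` is not `n`-regular. -/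
theorem not_n_regular_of_distinct_padic_val (n : ℕ) (hn : 1 ≤ n)
    (a : Fin n → ℤ) (ha : ∀ i, a i ≠ 0) (p : ℕ) (hp : p.Prime)
    (hdist : ∀ i j : Fin n,
      padicValInt p (a i) % n = padicValInt p (a j) % n → i = j) :
    ¬ IsRegularEq n a n := by
  haveI : Fact p.Prime := ⟨hp⟩
  intro hreg
  obtain ⟨x, hxpos, hmono, hsum⟩ :=
    hreg (fun m => ⟨padicValNat p m % n, Nat.mod_lt _ hn⟩)
  -- the terms
  set t : Fin n → ℤ := fun i => a i * (x i : ℤ) with ht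
  have htne : ∀ i, t i ≠ 0 := fun i =>
    mul_ne_zero (ha i) (by exact_mod_cast (hxpos i).ne')
  set v : Fin n → ℕ := fun i => padicValInt p (t i) with hv
  have hvmul : ∀ i, v i = padicValInt p (a i) + padicValNat p (x i) := by
    intro i
    rw [hv, ht]
    simp only
    rw [padicValInt.mul (ha i) (by exact_mod_cast (hxpos i).ne'), padicValInt.of_nat]
  -- same color means same valuation mod n for x's
  have hcol : ∀ i j, padicValNat p (x i) % n = padicValNat p (x j) % n := by
    intro i j
    have := hmono i j
    simpa [Fin.ext_iff] using this
  -- valuations of terms are pairwise distinct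
  have hvinj : ∀ i j, v i = v j → i = j := by
    intro i j hij
    apply hdist
    have h1 : (padicValInt p (a i) + padicValNat p (x i)) % n
        = (padicValInt p (a j) + padicValNat p (x j)) % n := by
      rw [← hvmul, ← hvmul, hij]
    have h2 := hcol i j
    -- cancel the x-valuations
    have h3 : (padicValInt p (a i) + padicValNat p (x i)) % n
        = (padicValInt p (a i) % n + padicValNat p (x j) % n) % n := by
      rw [Nat.add_mod, h2]
    have h4 : (padicValInt p (a j) + padicValNat p (x j)) % n
        = (padicValInt p (a j) % n + padicValNat p (x j) % n) % n := by
      rw [Nat.add_mod]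
    rw [h3, h4] at h1
    have h5 : padicValInt p (a i) % n ≡ padicValInt p (a j) % n [MOD n] :=
      Nat.ModEq.add_right_cancel' (padicValNat p (x j) % n) h1
    have := h5  -- h5 : _ % n % n = _ % n % n
    simpa [Nat.ModEq, Nat.mod_mod_of_dvd _ (dvd_refl n)] using this
  -- pick index of minimal valuation
  obtain ⟨i0, -, hmin⟩ := Finset.exists_min_image Finset.univ v ⟨⟨0, hn⟩, Finset.mem_univ _⟩
  have hlt : ∀ j, j ≠ i0 → v i0 < v j := by
    intro j hj
    rcases lt_or_eq_of_le (hmin j (Finset.mem_univ j)) with h | h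
    · exact h
    · exact absurd (hvinj i0 j h) (Ne.symm hj)
  have hdvd : (p : ℤ) ^ (v i0 + 1) ∣ ∑ j ∈ Finset.univ.erase i0, t j := by
    apply Finset.dvd_sum
    intro j hj
    have hj' : j ≠ i0 := (Finset.mem_erase.mp hj).1
    exact dvd_trans (pow_dvd_pow _ (hlt j hj')) (padicValInt_dvd (t j))
  have hsum' : ∑ j ∈ Finset.univ.erase i0, t j = -t i0 := by
    have := Finset.add_sum_erase Finset.univ t (Finset.mem_univ i0)
    rw [hsum] at this
    linarith
  rw [hsum'] at hdvd
  have hdvd2 : (p : ℤ) ^ (v i0 + 1) ∣ t i0 := (dvd_neg).mp hdvd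
  rw [padicValInt_dvd_iff] at hdvd2
  rcases hdvd2 with h | h
  · exact htne i0 h
  · simp only [hv] at h; omega
end

section
/- For every integer n ≥ 2, the equation x₁ − 2x₂ + 4x₃ − ⋯ + (−1)^{n−1}2^{n−1}xₙ = 0, i.e. ∑_{i=1}^{n} (−1)^{i−1} 2^{i−1} x_i = 0, is not n-regular: there exists a coloring C : ℕ⁺ → {1,…,n} with no monochromatic solution in positive integers. -/
/-- Theorem 3.2 (second half): for every `n ≥ 2`, the equation
`∑_{i=1}^{n} (−1)^{i−1} 2^{i−1} xᵢ = 0` is not `n`-regular. -/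
theorem alternating_powers_of_two_not_n_regular (n : ℕ) (hn : 2 ≤ n) :
    ¬ IsRegularEq n (fun i => (-1 : ℤ) ^ (i : ℕ) * 2 ^ (i : ℕ)) n := by
  intro h
  -- color each positive integer by its 2-adic valuation mod n
  obtain ⟨x, hpos, hmono, hsum⟩ :=
    h (fun m => ⟨(m.factorization 2) % n, Nat.mod_lt _ (by omega)⟩)
  set a : Fin n → ℕ := fun i => (x i).factorization 2 with ha
  set b : Fin n → ℕ := fun i => x i / 2 ^ (x i).factorization 2 with hb
  have hxne : ∀ i, x i ≠ 0 := fun i => (hpos i).ne'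
  have hdecompN : ∀ i, x i = 2 ^ (a i) * b i := by
    intro i
    simpa [ha, hb] using (Nat.ordProj_mul_ordCompl_eq_self (x i) 2).symm
  have hdecomp : ∀ i, (x i : ℤ) = 2 ^ (a i) * (b i : ℤ) := by
    intro i; exact_mod_cast congrArg (Nat.cast : ℕ → ℤ) (hdecompN i)
  have hcolor : ∀ i j, a i % n = a j % n := by
    intro i j
    exact congrArg Fin.val (hmono i j)
  set f : Fin n → ℕ := fun i => (i : ℕ) + a i with hf
  have hinj : ∀ i j, f i = f j → i = j := by
    intro i j hij
    have h1 : a i ≡ a j [MOD n] := hcolor i j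
    have h2 : (i : ℕ) + a i ≡ (j : ℕ) + a j [MOD n] := by
      simp only [hf] at hij; rw [hij]
    have h3 : (i : ℕ) ≡ (j : ℕ) [MOD n] := h1.add_right_cancel h2
    have h4 : (i : ℕ) % n = (j : ℕ) % n := h3
    have hi := i.isLt
    have hj := j.isLt
    rw [Nat.mod_eq_of_lt hi, Nat.mod_eq_of_lt hj] at h4
    exact Fin.ext h4
  have hne : NeZero n := ⟨by omega⟩
  obtain ⟨i₀, -, hmin⟩ :=
    Finset.exists_min_image Finset.univ f ⟨⟨0, by omega⟩, Finset.mem_univ _⟩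
  set m := f i₀ with hm
  set S : ℤ := ∑ i : Fin n, (-1 : ℤ) ^ (i : ℕ) * 2 ^ (f i - m) * (b i : ℤ) with hS
  have key : ∀ i : Fin n, ((-1 : ℤ) ^ (i : ℕ) * 2 ^ (i : ℕ)) * (x i : ℤ)
      = 2 ^ m * ((-1 : ℤ) ^ (i : ℕ) * 2 ^ (f i - m) * (b i : ℤ)) := by
    intro i
    have hfm : m ≤ f i := hmin i (Finset.mem_univ i)
    have h2 : (2 : ℤ) ^ m * 2 ^ (f i - m) = 2 ^ (i : ℕ) * 2 ^ (a i) := by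
      rw [← pow_add, ← pow_add]
      congr 1
      simp only [hf] at hfm ⊢
      omega
    rw [hdecomp i]
    calc ((-1 : ℤ) ^ (i : ℕ) * 2 ^ (i : ℕ)) * (2 ^ (a i) * (b i : ℤ))
        = ((-1 : ℤ) ^ (i : ℕ)) * (2 ^ (i : ℕ) * 2 ^ (a i)) * (b i : ℤ) := by ring
      _ = ((-1 : ℤ) ^ (i : ℕ)) * ((2 : ℤ) ^ m * 2 ^ (f i - m)) * (b i : ℤ) := by rw [h2]
      _ = 2 ^ m * ((-1 : ℤ) ^ (i : ℕ) * 2 ^ (f i - m) * (b i : ℤ)) := by ring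
  have hsum2 : (2 : ℤ) ^ m * S = 0 := by
    rw [hS, Finset.mul_sum, ← hsum]
    exact Finset.sum_congr rfl (fun i _ => (key i).symm)
  have hS0 : S = 0 := by
    rcases mul_eq_zero.mp hsum2 with h0 | h0
    · exact absurd h0 (pow_ne_zero m two_ne_zero)
    · exact h0
  -- but S is odd
  have hodd : Odd S := by
    have hsplit : S = (-1 : ℤ) ^ (i₀ : ℕ) * 2 ^ (f i₀ - m) * (b i₀ : ℤ)
        + ∑ i ∈ Finset.univ.erase i₀, (-1 : ℤ) ^ (i : ℕ) * 2 ^ (f i - m) * (b i : ℤ) := by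
      rw [hS, ← Finset.add_sum_erase Finset.univ _ (Finset.mem_univ i₀)]
    rw [hsplit]
    have hterm : Odd ((-1 : ℤ) ^ (i₀ : ℕ) * 2 ^ (f i₀ - m) * (b i₀ : ℤ)) := by
      have h0 : f i₀ - m = 0 := by omega
      rw [h0, pow_zero, mul_one]
      have hb1 : ¬ 2 ∣ b i₀ := Nat.not_dvd_ordCompl Nat.prime_two (hxne i₀)
      have hb2 : Odd (b i₀) := Nat.odd_iff.mpr ((Nat.two_dvd_ne_zero).mp hb1)
      have hb3 : Odd ((b i₀ : ℤ)) := Int.odd_coe_nat _ |>.mpr hb2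
      exact (Odd.pow ⟨-1, by ring⟩).mul hb3
    have hrest : Even (∑ i ∈ Finset.univ.erase i₀,
        (-1 : ℤ) ^ (i : ℕ) * 2 ^ (f i - m) * (b i : ℤ)) := by
      apply Finset.even_sum
      intro i hi
      have hine : i ≠ i₀ := (Finset.mem_erase.mp hi).1
      have hfm : m ≤ f i := hmin i (Finset.mem_univ i)
      have hne' : f i ≠ m := fun hh => hine (hinj i i₀ (hh.trans hm))
      have hk : f i - m ≠ 0 := by omega
      have h2e : Even ((2 : ℤ) ^ (f i - m)) := by
        rw [show f i - m = (f i - m - 1) + 1 by omega, pow_succ]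
        exact even_two.mul_left _
      exact (h2e.mul_left _).mul_right _
    exact hterm.add_even hrest
  rw [hS0] at hodd
  exact (Int.not_odd_iff_even.mpr Even.zero) hodd
end

section
/- Let p be a prime and n ≥ 2 an integer. The equation x₁ + px₂ + p²x₃ + ⋯ + p^{n−2}x_{n−1} − p^{n−1}xₙ = 0 is not n-regular: there exists a coloring C : ℕ⁺ → {1,…,n} with no monochromatic solution in positive integers. -/
/-- Theorem 3.3 (second half): for a prime `p` and `n ≥ 2`, the equation
`x₁ + px₂ + ⋯ + p^{n−2}x_{n−1} − p^{n−1}xₙ = 0` is not `n`-regular. -/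
theorem powers_of_prime_not_n_regular (p n : ℕ) (hp : p.Prime) (hn : 2 ≤ n) :
    ¬ IsRegularEq n
      (fun i => if (i : ℕ) = n - 1 then -((p : ℤ) ^ (n - 1)) else (p : ℤ) ^ (i : ℕ))
      n := by
  haveI : Fact p.Prime := ⟨hp⟩
  intro h
  have hn0 : 0 < n := by omega
  obtain ⟨x, hpos, hcol, hsum⟩ :=
    h (fun m => ⟨padicValNat p m % n, Nat.mod_lt _ hn0⟩)
  set L : Fin n := ⟨n - 1, by omega⟩ with hL
  set v : Fin n → ℕ := fun i => padicValNat p (x i) with hv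
  have hx0 : ∀ i, x i ≠ 0 := fun i => (hpos i).ne'
  have hvmod : ∀ i j, v i % n = v j % n := by
    intro i j
    have := hcol i j
    exact congrArg Fin.val this
  -- turn the integer identity into a natural-number identity
  set s : Finset (Fin n) := Finset.univ.erase L with hs
  have hsplit : (∑ i ∈ s, (p : ℤ) ^ (i : ℕ) * (x i : ℤ)) = (p : ℤ) ^ (n - 1) * (x L : ℤ) := by
    have := hsum
    rw [← Finset.add_sum_erase _ _ (Finset.mem_univ L)] at this
    simp only [hL] at this
    rw [if_true] at this
    have heq : ∀ i ∈ s, (if (i : ℕ) = n - 1 then -((p : ℤ) ^ (n - 1)) else (p : ℤ) ^ (i : ℕ)) * (x i : ℤ)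
        = (p : ℤ) ^ (i : ℕ) * (x i : ℤ) := by
      intro i hi
      have hiL : i ≠ L := (Finset.mem_erase.mp hi).1
      rw [if_neg (fun hc => hiL (Fin.ext hc))]
    rw [Finset.sum_congr rfl heq] at this
    linarith
  have hnat : (∑ i ∈ s, p ^ (i : ℕ) * x i) = p ^ (n - 1) * x L := by
    have : ((∑ i ∈ s, p ^ (i : ℕ) * x i : ℕ) : ℤ) = ((p ^ (n - 1) * x L : ℕ) : ℤ) := by
      push_cast
      exact hsplit
    exact_mod_cast this
  -- valuations of terms
  have hterm : ∀ i : Fin n, padicValNat p (p ^ (i : ℕ) * x i) = (i : ℕ) + v i := by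
    intro i
    rw [padicValNat.mul (pow_ne_zero _ hp.pos.ne') (hx0 i), padicValNat.prime_pow]
  -- minimum over s
  have hsne : s.Nonempty := ⟨⟨0, by omega⟩, by
    refine Finset.mem_erase.mpr ⟨?_, Finset.mem_univ _⟩
    intro hc
    have := congrArg Fin.val hc
    simp [hL] at this
    omega⟩
  obtain ⟨i0, hi0s, hi0min⟩ := s.exists_min_image (fun i => (i : ℕ) + v i) hsne
  set m : ℕ := (i0 : ℕ) + v i0 with hm
  -- distinctness mod n
  have hdist : ∀ i j : Fin n, (i : ℕ) + v i = (j : ℕ) + v j → i = j := by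
    intro i j hij
    have h1 : ((i : ℕ) + v i) % n = ((j : ℕ) + v j) % n := by rw [hij]
    have h2 : ((i : ℕ) + v i) % n = ((i : ℕ) + v j) % n := by
      rw [Nat.add_mod, hvmod i j, ← Nat.add_mod]
    have h3 : ((i : ℕ) + v j) % n = ((j : ℕ) + v j) % n := by omega
    have h4 : (i : ℕ) % n = (j : ℕ) % n :=
      (Nat.ModEq.add_right_cancel' (v j) h3)
    have : (i : ℕ) = (j : ℕ) := by
      rwa [Nat.mod_eq_of_lt i.isLt, Nat.mod_eq_of_lt j.isLt] at h4
    exact Fin.ext this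
  have hstrict : ∀ j ∈ s, j ≠ i0 → m < (j : ℕ) + v j := by
    intro j hj hji
    rcases lt_or_eq_of_le (hi0min j hj) with h | h
    · exact h
    · exact absurd (hdist j i0 h.symm) hji
  set r : ℕ := (n - 1) + v L with hr
  have hrm : r ≠ m := by
    intro hc
    have : L = i0 := hdist L i0 (by simpa [hL] using hc)
    exact (Finset.mem_erase.mp hi0s).1 this.symm
  -- term nonzero
  have htne : ∀ i : Fin n, p ^ (i : ℕ) * x i ≠ 0 :=
    fun i => Nat.mul_ne_zero (pow_ne_zero _ hp.pos.ne') (hx0 i)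
  have hRHSne : p ^ (n - 1) * x L ≠ 0 := Nat.mul_ne_zero (pow_ne_zero _ hp.pos.ne') (hx0 L)
  have hvR : padicValNat p (p ^ (n - 1) * x L) = r := by
    rw [padicValNat.mul (pow_ne_zero _ hp.pos.ne') (hx0 L), padicValNat.prime_pow]
  -- divisibility of each term by p^(val)
  have hdvdterm : ∀ (i : Fin n), p ^ ((i : ℕ) + v i) ∣ p ^ (i : ℕ) * x i := by
    intro i
    rw [pow_add]
    exact mul_dvd_mul_left _ pow_padicValNat_dvd
  rcases lt_or_gt_of_ne hrm with hlt | hgt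
  · -- r < m : p^(r+1) divides every LHS term, hence RHS, contradiction
    have hdvd : p ^ (r + 1) ∣ ∑ i ∈ s, p ^ (i : ℕ) * x i := by
      refine Finset.dvd_sum ?_
      intro j hj
      exact dvd_trans (pow_dvd_pow p (by have := hi0min j hj; omega)) (hdvdterm j)
    rw [hnat] at hdvd
    have := (padicValNat_dvd_iff_le hRHSne).mp hdvd
    omega
  · -- m < r : p^(m+1) divides RHS and all terms except i0, so divides the i0 term
    have hdR : p ^ (m + 1) ∣ p ^ (n - 1) * x L := by
      have h1 : p ^ ((n - 1) + v L) ∣ p ^ (n - 1) * x L := by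
        rw [pow_add]; exact mul_dvd_mul_left _ pow_padicValNat_dvd
      exact dvd_trans (pow_dvd_pow p (show m + 1 ≤ (n - 1) + v L by omega)) h1
    have hdrest : p ^ (m + 1) ∣ ∑ j ∈ s.erase i0, p ^ (j : ℕ) * x j := by
      refine Finset.dvd_sum ?_
      intro j hj
      obtain ⟨hji, hjs⟩ := Finset.mem_erase.mp hj
      exact dvd_trans (pow_dvd_pow p (hstrict j hjs hji)) (hdvdterm j)
    have hsum2 : p ^ (i0 : ℕ) * x i0 + ∑ j ∈ s.erase i0, p ^ (j : ℕ) * x j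
        = p ^ (n - 1) * x L := by
      rw [Finset.add_sum_erase s (fun j : Fin n => p ^ (j : ℕ) * x j) hi0s]; exact hnat
    have hdi0 : p ^ (m + 1) ∣ p ^ (i0 : ℕ) * x i0 := by
      have := Nat.dvd_sub hdR hdrest
      rwa [show p ^ (n - 1) * x L - ∑ j ∈ s.erase i0, p ^ (j : ℕ) * x j
        = p ^ (i0 : ℕ) * x i0 by omega] at this
    have := (padicValNat_dvd_iff_le (htne i0)).mp hdi0
    rw [hterm i0] at this
    omega
end

section
/- Let p be a prime and n ≥ 2 an integer. The equation x₁ + px₂ + ⋯ + p^{n−2}x_{n−1} − p^{n−1}xₙ = 0 has degree of regularity exactly n−1: it is (n−1)-regular but not n-regular. -/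
open Finset Filter

/-- Every function to a finite type has an ultrafilter-limit value. -/
private lemma pop_exists_ultralim {γ : Type*} [Finite γ] (𝒰 : Ultrafilter ℕ) (f : ℕ → γ) :
    ∃ c, {L | f L = c} ∈ 𝒰 := by
  by_contra hc
  push_neg at hc
  have h1 : ∀ c : γ, {L | f L = c}ᶜ ∈ 𝒰 := fun c => (Ultrafilter.compl_mem_iff_notMem).mpr (hc c)
  have h2 : (⋂ c : γ, {L | f L = c}ᶜ) ∈ 𝒰 := (Filter.iInter_mem).mpr h1
  have h3 : (⋂ c : γ, {L | f L = c}ᶜ) = ∅ := by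
    ext L; simp
  rw [h3] at h2
  exact (Filter.empty_notMem (𝒰 : Filter ℕ)) h2

/-- A Brauer-type simultaneous configuration theorem: for any finite coloring `κ` of ℕ,
any `h > 0` and finitely many `g d`, there are `y d, w d > 0` with all of
`y d`, `y d + g d * w d`, `h * w d` of one common color. -/
private lemma pop_brauer {m : ℕ} (h : ℕ) (hh : 0 < h) (g : Fin m → ℕ) {γ : Type*} [Fintype γ] :
    ∀ (r : ℕ) (κ : ℕ → γ) (S : Finset γ), (∀ x, 0 < x → κ x ∈ S) → S.card ≤ r →
    ∃ (P : γ) (y w : Fin m → ℕ), (∀ d, 0 < y d) ∧ (∀ d, 0 < w d) ∧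
      (∀ d, κ (y d) = P ∧ κ (y d + g d * w d) = P ∧ κ (h * w d) = P) := by
  classical
  intro r
  induction r with
  | zero =>
    intro κ S hS hcard
    have h1 : κ 1 ∈ S := hS 1 one_pos
    have h2 : S = ∅ := Finset.card_eq_zero.mp (Nat.le_zero.mp hcard)
    rw [h2] at h1
    exact absurd h1 (Finset.notMem_empty _)
  | succ r IH =>
    intro κ S hS hcard
    set G : ℕ := ∑ d, g d with hG
    have hgle : ∀ d, g d ≤ G := by
      intro d
      exact Finset.single_le_sum (f := g) (fun i _ => Nat.zero_le _) (mem_univ d)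
    have hAP : ∀ L : ℕ, ∃ (a : ℕ), 0 < a ∧ ∃ (b : ℕ) (c : γ),
        ∀ s ≤ 1 + G * L, κ (a * s + b) = c := by
      intro L
      obtain ⟨a, ha, b, c, hc⟩ :=
        Combinatorics.exists_mono_homothetic_copy (Finset.range (1 + G * L + 1)) κ
      refine ⟨a, ha, b, c, fun s hs => ?_⟩
      have := hc s (Finset.mem_range.mpr (by omega))
      simpa [smul_eq_mul] using this
    choose aa haa bb cc hAPc using hAP
    by_cases hex : ∃ L : ℕ, ∀ d, ∃ j, 1 ≤ j ∧ g d * j + 1 ≤ 1 + G * L ∧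
        κ (h * (j * aa L)) = cc L
    · obtain ⟨L, hL⟩ := hex
      choose jj hj1 hj2 hj3 using hL
      refine ⟨cc L, fun d => aa L + bb L, fun d => jj d * aa L, ?_, ?_, ?_⟩
      · intro d; exact Nat.add_pos_left (haa L) _
      · intro d; exact Nat.mul_pos (hj1 d) (haa L)
      · intro d
        refine ⟨?_, ?_, hj3 d⟩
        · have := hAPc L 1 (by omega)
          simpa using this
        · have harr : aa L + bb L + g d * (jj d * aa L) = aa L * (1 + g d * jj d) + bb L := by
            ring
          rw [harr]
          exact hAPc L (1 + g d * jj d) (by have := hj2 d; omega)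
    · push_neg at hex
      have hQ : ∀ L : ℕ, ∃ (c : γ) (D : ℕ), 0 < D ∧ c ∈ S ∧
          ∀ j, 1 ≤ j → j ≤ L → κ (h * (j * D)) ≠ c := by
        intro L
        obtain ⟨d, hd⟩ := hex L
        refine ⟨cc L, aa L, haa L, ?_, ?_⟩
        · have h1 : κ (aa L * 1 + bb L) = cc L := hAPc L 1 (by omega)
          have h2 : 0 < aa L * 1 + bb L := by have := haa L; omega
          exact h1 ▸ hS _ h2
        · intro j hj1 hjL hcol
          have hgj : g d * j + 1 ≤ 1 + G * L := by
            have h3 : g d * j ≤ G * L := Nat.mul_le_mul (hgle d) hjL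
            omega
          exact hd j hj1 hgj hcol
      choose cstar Dstar hD1 hD2 hD3 using hQ
      set 𝒰 : Ultrafilter ℕ := Filter.hyperfilter ℕ with h𝒰
      obtain ⟨cinf, hcinf⟩ := pop_exists_ultralim 𝒰 cstar
      have hlim : ∀ x : ℕ, ∃ c, {L | κ (h * (x * Dstar L)) = c} ∈ 𝒰 :=
        fun x => pop_exists_ultralim 𝒰 _
      choose κ' hκ' using hlim
      have hmem : ∀ x, 0 < x → κ' x ∈ S.erase cinf := by
        intro x hx
        have h1 : {L | κ (h * (x * Dstar L)) = κ' x} ∈ 𝒰 := hκ' x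
        have h2 : {L | x ≤ L} ∈ 𝒰 := by
          apply Filter.mem_hyperfilter_of_finite_compl
          have hsub : {L : ℕ | x ≤ L}ᶜ ⊆ Finset.range x := by
            intro L hL
            simp only [Set.mem_compl_iff, Set.mem_setOf_eq, not_le] at hL
            simpa using hL
          exact Set.Finite.subset (Finset.range x).finite_toSet hsub
        have h3 : ({L | κ (h * (x * Dstar L)) = κ' x} ∩ ({L | x ≤ L} ∩ {L | cstar L = cinf}))
            ∈ 𝒰 := inter_mem h1 (inter_mem h2 hcinf)
        obtain ⟨L, hL1, hL2, hL3⟩ := Filter.nonempty_of_mem h3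
        rw [Finset.mem_erase]
        constructor
        · intro hbad
          apply hD3 L x hx hL2
          rw [Set.mem_setOf_eq] at hL1 hL3
          rw [hL1, hbad, ← hL3]
        · rw [Set.mem_setOf_eq] at hL1
          rw [← hL1]
          apply hS
          have := hD1 L
          positivity
      have hcinfS : cinf ∈ S := by
        obtain ⟨L, hL⟩ := Filter.nonempty_of_mem hcinf
        rw [Set.mem_setOf_eq] at hL
        rw [← hL]
        exact hD2 L
      have hcard' : (S.erase cinf).card ≤ r := by
        rw [Finset.card_erase_of_mem hcinfS]
        omega
      obtain ⟨P', y', w', hy'pos, hw'pos, hP'⟩ := IH κ' (S.erase cinf) hmem hcard'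
      have hsets : (⋂ d : Fin m, ({L | κ (h * (y' d * Dstar L)) = κ' (y' d)} ∩
          ({L | κ (h * ((y' d + g d * w' d) * Dstar L)) = κ' (y' d + g d * w' d)} ∩
           {L | κ (h * ((h * w' d) * Dstar L)) = κ' (h * w' d)}))) ∈ 𝒰 := by
        apply Filter.iInter_mem.mpr
        intro d
        exact inter_mem (hκ' _) (inter_mem (hκ' _) (hκ' _))
      obtain ⟨L, hL⟩ := Filter.nonempty_of_mem hsets
      simp only [Set.mem_iInter, Set.mem_inter_iff, Set.mem_setOf_eq] at hL
      refine ⟨P', fun d => h * (y' d * Dstar L), fun d => (h * w' d) * Dstar L, ?_, ?_, ?_⟩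
      · intro d; have := hD1 L; have := hy'pos d; positivity
      · intro d; have := hD1 L; have := hw'pos d; positivity
      · intro d
        obtain ⟨hA, hB, hC⟩ := hL d
        obtain ⟨hP1, hP2, hP3⟩ := hP' d
        refine ⟨?_, ?_, ?_⟩
        · rw [hA, hP1]
        · have harr : h * (y' d * Dstar L) + g d * ((h * w' d) * Dstar L)
              = h * ((y' d + g d * w' d) * Dstar L) := by ring
          rw [harr, hB, hP2]
        · rw [hC, hP3]

/-- The positive direction: `(n-1)`-regularity, in the form with `n = m+1`. -/
private lemma pop_regular (p m : ℕ) (hp2 : 2 ≤ p) (hm : 1 ≤ m) (C : ℕ → Fin m) :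
    ∃ x : Fin (m+1) → ℕ, (∀ i, 0 < x i) ∧ (∀ i j, C (x i) = C (x j)) ∧
      (∑ i : Fin (m+1), (if (i:ℕ) = m then -((p:ℤ)^m) else (p:ℤ)^(i:ℕ)) * (x i : ℤ)) = 0 := by
  classical
  set Q : ℕ := ∑ i ∈ Finset.range m, p^i with hQ
  -- the pattern coloring: each t gets a pair a < b with C (p^a t) = C (p^b t)
  have key : ∀ t : ℕ, ∃ q : Fin (m+1) × Fin (m+1) × Fin m,
      ((q.1:ℕ) < (q.2.1:ℕ)) ∧ C (p^(q.1:ℕ) * t) = q.2.2 ∧ C (p^(q.2.1:ℕ) * t) = q.2.2 := by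
    intro t
    have hcard : Fintype.card (Fin m) < Fintype.card (Fin (m+1)) := by simp
    obtain ⟨i, j, hij, hfij⟩ := Fintype.exists_ne_map_eq_of_card_lt
      (fun i : Fin (m+1) => C (p^(i:ℕ) * t)) hcard
    have hijv : (i:ℕ) ≠ (j:ℕ) := fun hc => hij (Fin.ext hc)
    rcases hijv.lt_or_gt with hlt | hgt
    · exact ⟨(i, j, C (p^(i:ℕ) * t)), hlt, rfl, by rw [← hfij]⟩
    · exact ⟨(j, i, C (p^(j:ℕ) * t)), hgt, rfl, by rw [hfij]⟩
  choose pat hpat1 hpat2 hpat3 using key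
  obtain ⟨P, yy, ww, hypos, hwpos, hPP⟩ :=
    pop_brauer (p^m) (by positivity) (fun d : Fin m => Q - p^(m - ((d:ℕ)+1)))
      (Fintype.card (Fin (m+1) × Fin (m+1) × Fin m)) pat
      Finset.univ (fun x _ => Finset.mem_univ _) (le_of_eq Finset.card_univ)
  obtain ⟨A, B, c⟩ := P
  -- basic facts about the pattern (a, b, c)
  have hPy0 := (hPP ⟨0, hm⟩).1
  have hab : (A:ℕ) < (B:ℕ) := by
    have := hpat1 (yy ⟨0, hm⟩)
    rw [hPy0] at this
    exact this
  have hbm : (B:ℕ) ≤ m := by have := B.isLt; omega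
  have hi₀m : m - ((B:ℕ) - (A:ℕ)) < m := by omega
  have hpQ : p ^ (m - ((B:ℕ) - (A:ℕ))) ≤ Q := by
    rw [hQ]
    exact Finset.single_le_sum (f := fun i => p^i) (fun i _ => Nat.zero_le _)
      (Finset.mem_range.mpr hi₀m)
  -- specialize to the block d* = b - a - 1
  set dstar : Fin m := ⟨(B:ℕ) - (A:ℕ) - 1, by omega⟩ with hdstar
  set Y := yy dstar with hY
  set W := ww dstar with hW
  obtain ⟨hPY, hPYG, hPW⟩ := hPP dstar
  have hgd : Q - p^(m - (((dstar : Fin m):ℕ)+1)) = Q - p^(m - ((B:ℕ) - (A:ℕ))) := by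
    congr 2
    simp only [hdstar]
    omega
  rw [hgd] at hPYG
  set a := (A:ℕ) with ha
  set b := (B:ℕ) with hb
  set i₀ := m - (b - a) with hi₀
  set T := Q - p^i₀ with hT
  -- color facts
  have fact1 : C (p^b * Y) = c := by
    have := hpat3 Y
    rw [hPY] at this
    exact this
  have fact3 : C (p^a * (Y + T * W)) = c := by
    have := hpat2 (Y + T * W)
    rw [hPYG] at this
    exact this
  have fact5 : C (p^a * (p^m * W)) = c := by
    have := hpat2 (p^m * W)
    rw [hPW] at this
    exact this
  have hYpos : 0 < Y := hypos dstar
  have hWpos : 0 < W := hwpos dstar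
  -- the solution
  set x : Fin (m+1) → ℕ := fun i =>
    if (i:ℕ) = m then p^a * (Y + T * W)
    else if (i:ℕ) = i₀ then p^b * Y else p^(m+a) * W with hx
  have hppos : 0 < p := by omega
  refine ⟨x, ?_, ?_, ?_⟩
  · intro i
    simp only [hx]
    split
    · positivity
    · split
      · positivity
      · positivity
  · have hall : ∀ i, C (x i) = c := by
      intro i
      simp only [hx]
      split
      · exact fact3
      · split
        · exact fact1
        · have harr : p^(m+a) * W = p^a * (p^m * W) := by ring
          rw [harr]
          exact fact5
    exact fun i j => (hall i).trans (hall j).symm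
  · -- the linear equation
    have hilt : ∀ i : Fin m, ((i.castSucc : Fin (m+1)) : ℕ) ≠ m := by
      intro i
      have := i.isLt
      simp only [Fin.coe_castSucc]
      omega
    have hxc : ∀ i : Fin m, x (i.castSucc) = if (i:ℕ) = i₀ then p^b * Y else p^(m+a) * W := by
      intro i
      simp only [hx, Fin.coe_castSucc]
      rw [if_neg (by have := i.isLt; omega : ¬ ((i:ℕ) = m))]
    have hxlast : x (Fin.last m) = p^a * (Y + T * W) := by
      simp [hx]
    -- natural number key identity
    have hkey : (∑ i : Fin m, p^(i:ℕ) * x (i.castSucc)) = p^m * x (Fin.last m) := by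
      set i₀F : Fin m := ⟨i₀, hi₀m⟩ with hi₀F
      have hstep1 : (∑ i : Fin m, p^(i:ℕ) * x (i.castSucc))
          = ∑ i : Fin m, (if i = i₀F then p^(i:ℕ) * (p^b * Y) else p^(i:ℕ) * (p^(m+a) * W)) := by
        apply Finset.sum_congr rfl
        intro i _
        by_cases hii : i = i₀F
        · rw [hxc i, if_pos hii, if_pos (show (i:ℕ) = i₀ by rw [hii])]
        · rw [hxc i, if_neg hii, if_neg (show ¬ ((i:ℕ) = i₀) from fun hc =>
            hii (Fin.ext (by simpa [hi₀F] using hc)))]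
      rw [hstep1, ← Finset.add_sum_erase _ _ (mem_univ i₀F), if_pos rfl]
      have hstep2 : (∑ i ∈ univ.erase i₀F,
          (if i = i₀F then p^(i:ℕ) * (p^b * Y) else p^(i:ℕ) * (p^(m+a) * W)))
          = (∑ i ∈ univ.erase i₀F, p^(i:ℕ)) * (p^(m+a) * W) := by
        rw [Finset.sum_mul]
        apply Finset.sum_congr rfl
        intro i hi
        rw [if_neg (Finset.ne_of_mem_erase hi)]
      rw [hstep2]
      have hQsplit : p^(i₀F:ℕ) + (∑ i ∈ univ.erase i₀F, p^(i:ℕ)) = Q := by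
        rw [Finset.add_sum_erase _ (fun i : Fin m => p^(i:ℕ)) (mem_univ i₀F), hQ]
        exact Fin.sum_univ_eq_sum_range (fun i => p^i) m
      have hiF : (i₀F : ℕ) = i₀ := rfl
      rw [hiF] at hQsplit
      have hE : (∑ i ∈ univ.erase i₀F, p^(i:ℕ)) = T := by omega
      rw [hE, hxlast]
      have hexp : i₀ + b = m + a := by omega
      have hl : p ^ i₀ * (p ^ b * Y) = p^(m+a) * Y := by
        rw [← mul_assoc, ← pow_add, hexp]
      rw [hl, pow_add]
      ring
    -- conclude over ℤ
    rw [Fin.sum_univ_castSucc]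
    simp only [Fin.coe_castSucc, Fin.val_last, if_pos]
    have hco : ∀ i : Fin m,
        ((if ((i:ℕ) = m) then -((p:ℤ)^m) else (p:ℤ)^((i:ℕ))) * ((x i.castSucc : ℕ) : ℤ))
        = (p:ℤ)^(i:ℕ) * ((x i.castSucc : ℕ) : ℤ) := by
      intro i
      rw [if_neg (by have := i.isLt; omega : ¬ ((i:ℕ) = m))]
    rw [Finset.sum_congr rfl (fun i _ => hco i)]
    have hkeyZ : (∑ i : Fin m, (p:ℤ)^(i:ℕ) * ((x i.castSucc : ℕ) : ℤ))
        = (p:ℤ)^m * ((x (Fin.last m) : ℕ) : ℤ) := by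
      exact_mod_cast congrArg (fun t : ℕ => (t : ℤ)) hkey
    linarith

private lemma pop_notreg (p n : ℕ) (hp : p.Prime) (hn : 2 ≤ n) :
    ¬ (∀ C : ℕ → Fin n, ∃ x : Fin n → ℕ, (∀ i, 0 < x i) ∧
      (∀ i j, C (x i) = C (x j)) ∧
      (∑ i : Fin n, (if (i : ℕ) = n - 1 then -((p : ℤ) ^ (n - 1)) else (p : ℤ) ^ (i : ℕ)) * (x i : ℤ)) = 0) := by
  have hn0 : 0 < n := by omega
  intro H
  obtain ⟨x, hxpos, hmono, hsum⟩ := H (fun t => ⟨(t.factorization p) % n, Nat.mod_lt _ hn0⟩)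
  set v : Fin n → ℕ := fun i => ((x i).factorization p) with hv
  set u : Fin n → ℕ := fun i => (x i) / p ^ (v i) with hu
  have hx : ∀ i, x i = p ^ (v i) * u i := by
    intro i
    rw [hv, hu]
    exact (Nat.ordProj_mul_ordCompl_eq_self (x i) p).symm
  have hpu : ∀ i, ¬ (p ∣ u i) := by
    intro i
    exact Nat.not_dvd_ordCompl hp (hxpos i).ne'
  have hvmod : ∀ i j, v i % n = v j % n := by
    intro i j
    have := hmono i j
    simpa [Fin.ext_iff] using this
  set e : Fin n → ℕ := fun i => (i : ℕ) + v i with he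
  have hedist : ∀ i j : Fin n, i ≠ j → e i ≠ e j := by
    intro i j hij heq
    have h1 : v i ≡ v j [MOD n] := hvmod i j
    have h2 : (i : ℕ) + v i ≡ (j : ℕ) + v j [MOD n] := by
      simp only [he] at heq; rw [heq]
    have h3 : (i : ℕ) ≡ (j : ℕ) [MOD n] := Nat.ModEq.add_right_cancel h1 h2
    have h4 : (i : ℕ) % n = (j : ℕ) % n := h3
    rw [Nat.mod_eq_of_lt i.isLt, Nat.mod_eq_of_lt j.isLt] at h4
    exact hij (Fin.ext h4)
  -- minimal exponent index
  obtain ⟨j₀, -, hj₀⟩ := Finset.exists_min_image (univ : Finset (Fin n)) e ⟨⟨0, hn0⟩, mem_univ _⟩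
  have hj₀lt : ∀ i, i ≠ j₀ → e j₀ < e i := by
    intro i hi
    exact lt_of_le_of_ne (hj₀ i (mem_univ i)) (fun hc => hedist j₀ i (Ne.symm hi) hc)
  -- rewrite each term
  have hterm : ∀ i : Fin n,
      (if (i : ℕ) = n - 1 then -((p : ℤ) ^ (n - 1)) else (p : ℤ) ^ (i : ℕ)) * (x i : ℤ)
      = (if (i : ℕ) = n - 1 then (-1 : ℤ) else 1) * ((p:ℤ) ^ (e i) * (u i : ℤ)) := by
    intro i
    by_cases hcase : (i : ℕ) = n - 1
    · rw [if_pos hcase, if_pos hcase, hx i, he]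
      push_cast
      rw [hcase]
      ring
    · rw [if_neg hcase, if_neg hcase, hx i, he]
      push_cast
      ring
  rw [Finset.sum_congr rfl (fun i _ => hterm i)] at hsum
  -- split off j₀
  rw [← Finset.add_sum_erase _ _ (mem_univ j₀)] at hsum
  have hdvd : ((p:ℤ) ^ (e j₀ + 1)) ∣ ∑ i ∈ univ.erase j₀,
      (if (i : ℕ) = n - 1 then (-1 : ℤ) else 1) * ((p:ℤ) ^ (e i) * (u i : ℤ)) := by
    apply Finset.dvd_sum
    intro i hi
    have hlt : e j₀ + 1 ≤ e i := hj₀lt i (Finset.ne_of_mem_erase hi)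
    have : ((p:ℤ) ^ (e j₀ + 1)) ∣ (p:ℤ) ^ (e i) := pow_dvd_pow _ hlt
    exact Dvd.dvd.mul_left (this.mul_right _) _
  have hdvd2 : ((p:ℤ) ^ (e j₀ + 1)) ∣
      (if ((j₀ : ℕ) = n - 1) then (-1 : ℤ) else 1) * ((p:ℤ) ^ (e j₀) * (u j₀ : ℤ)) := by
    have := hsum
    have h5 : (if ((j₀ : ℕ) = n - 1) then (-1 : ℤ) else 1) * ((p:ℤ) ^ (e j₀) * (u j₀ : ℤ))
        = - ∑ i ∈ univ.erase j₀,
      (if (i : ℕ) = n - 1 then (-1 : ℤ) else 1) * ((p:ℤ) ^ (e i) * (u i : ℤ)) := by linarith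
    rw [h5]
    exact dvd_neg.mpr hdvd
  have hdvd3 : ((p:ℤ) ^ (e j₀ + 1)) ∣ ((p:ℤ) ^ (e j₀) * (u j₀ : ℤ)) := by
    rcases (em ((j₀ : ℕ) = n - 1)) with hc | hc
    · rw [if_pos hc] at hdvd2
      rw [neg_one_mul] at hdvd2
      exact dvd_neg.mp hdvd2
    · rw [if_neg hc, one_mul] at hdvd2
      exact hdvd2
  have hpz : (p : ℤ) ≠ 0 := by
    have := hp.pos; positivity
  have hdvd4 : (p : ℤ) ∣ (u j₀ : ℤ) := by
    rw [pow_succ] at hdvd3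
    exact (mul_dvd_mul_iff_left (pow_ne_zero (e j₀) hpz)).mp hdvd3
  have : (p : ℕ) ∣ u j₀ := by exact_mod_cast hdvd4
  exact hpu j₀ this


/-- Theorem 3.3: for a prime `p` and `n ≥ 2`, the equation
`x₁ + px₂ + ⋯ + p^{n−2}x_{n−1} − p^{n−1}xₙ = 0` has degree of regularity exactly
`n − 1`: it is `(n−1)`-regular but not `n`-regular. -/
theorem powers_of_prime_dor (p n : ℕ) (hp : p.Prime) (hn : 2 ≤ n) :
    IsRegularEq n
      (fun i => if (i : ℕ) = n - 1 then -((p : ℤ) ^ (n - 1)) else (p : ℤ) ^ (i : ℕ))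
      (n - 1) ∧
    ¬ IsRegularEq n
      (fun i => if (i : ℕ) = n - 1 then -((p : ℤ) ^ (n - 1)) else (p : ℤ) ^ (i : ℕ))
      n := by
  constructor
  · intro C
    obtain ⟨m, rfl⟩ : ∃ m, n = m + 1 := ⟨n - 1, by omega⟩
    exact pop_regular p m hp.two_le (by omega) C
  · exact pop_notreg p n hp hn
end

section
/- Let p be a prime, n ≥ 2 an integer, and let q₁, …, q_{n−1} be positive integers none of which is divisible by p. Then the equation q₁x₁ + q₂px₂ + ⋯ + q_{n−1}p^{n−2}x_{n−1} − (q₁ + q₂p + ⋯ + q_{n−1}p^{n−2})·p^{n−1}·xₙ = 0 is not n-regular: there exists a coloring C : ℕ⁺ → {1,…,n} with no monochromatic solution in positive integers. -/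
open Finset IsUltrametricDist

theorem Finset.sum_ne_zero_of_pairwise_padicValInt_ne {ι : Type*} {p : ℕ} [Fact p.Prime]
    {s : Finset ι} (hs : s.Nonempty) {f : ι → ℤ} (hf : ∀ i ∈ s, f i ≠ 0)
    (hv : (s : Set ι).Pairwise fun i j ↦ padicValInt p (f i) ≠ padicValInt p (f j)) :
    ∑ i ∈ s, f i ≠ 0 := by
  have hnorm : ∀ i ∈ s, ‖(f i : ℚ_[p])‖ = (p : ℝ) ^ (-(padicValInt p (f i) : ℤ)) := fun i hi ↦ by
    rw [Padic.norm_eq_zpow_neg_valuation (by exact_mod_cast hf i hi), Padic.valuation_intCast]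
  have hp : (1 : ℝ) < p := by exact_mod_cast (Fact.out : p.Prime).one_lt
  suffices ‖∑ i ∈ s, (f i : ℚ_[p])‖ ≠ 0 by exact_mod_cast fun h ↦ this (by simp [← Int.cast_sum, h])
  rw [norm_sum_eq_sup'_of_pairwise_ne hs]
  · obtain ⟨i, hi, hmax⟩ := s.exists_mem_eq_sup' hs fun i ↦ ‖(f i : ℚ_[p])‖
    rw [hmax, hnorm i hi]
    positivity
  · intro i hi j hj hij
    rw [hnorm i hi, hnorm j hj]
    exact (zpow_right_injective₀ (by positivity) hp.ne').ne (by simpa using hv hi hj hij)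

theorem padicValInt_mul_pow_of_not_dvd {p : ℕ} [Fact p.Prime] {c : ℤ} (hc : ¬(p : ℤ) ∣ c)
    (k : ℕ) : padicValInt p (c * p ^ k) = k := by
  have hc0 : c ≠ 0 := by rintro rfl; exact hc (dvd_zero _)
  rw [padicValInt.mul hc0 (pow_ne_zero _ (by exact_mod_cast (Fact.out : p.Prime).ne_zero)),
    padicValInt.eq_zero_of_not_dvd hc, ← Nat.cast_pow, padicValInt.of_nat,
    padicValNat.prime_pow, zero_add]

theorem not_dvd_sum_mul_pow {R : Type*} [CommRing R] {p : R} {m : ℕ} (hm : 0 < m)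
    {c : Fin m → R} (hc : ¬p ∣ c ⟨0, hm⟩) : ¬p ∣ ∑ j, c j * p ^ (j : ℕ) := by
  obtain ⟨m, rfl⟩ := Nat.exists_eq_add_one_of_ne_zero hm.ne'
  rw [Fin.sum_univ_succ, Fin.val_zero, pow_zero, mul_one]
  refine fun h ↦ hc ((dvd_add_left (dvd_sum fun j _ ↦ ?_)).mp h)
  exact (dvd_pow_self p (Nat.succ_ne_zero (j : ℕ))).mul_left _

def padicValColoring (p r : ℕ) [NeZero r] (m : ℕ) : Fin r := Fin.ofNat r (padicValNat p m)

theorem not_isRegularEq_of_padicValInt_injective_mod {n r p : ℕ} [Fact p.Prime] [NeZero r]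
    (hn : 0 < n) {a : Fin n → ℤ} (ha : ∀ i, a i ≠ 0)
    (hv : ∀ i j, padicValInt p (a i) ≡ padicValInt p (a j) [MOD r] → i = j) :
    ¬IsRegularEq n a r := by
  intro hreg
  obtain ⟨x, hx, hmono, hsum⟩ := hreg (padicValColoring p r)
  have hx0 : ∀ i, (x i : ℤ) ≠ 0 := fun i ↦ by exact_mod_cast (hx i).ne'
  have hval : ∀ i, padicValInt p (a i * x i) = padicValInt p (a i) + padicValNat p (x i) :=
    fun i ↦ by rw [padicValInt.mul (ha i) (hx0 i), padicValInt.of_nat]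
  have hxmod : ∀ i j, padicValNat p (x i) ≡ padicValNat p (x j) [MOD r] := fun i j ↦ by
    simpa [Nat.ModEq, padicValColoring, Fin.ext_iff] using hmono i j
  refine sum_ne_zero_of_pairwise_padicValInt_ne (p := p) ⟨⟨0, hn⟩, mem_univ _⟩
    (fun i _ ↦ mul_ne_zero (ha i) (hx0 i)) (fun i _ j _ hij heq ↦ hij (hv i j ?_)) hsum
  rw [hval, hval] at heq
  exact Nat.ModEq.add_right_cancel (hxmod i j) (by rw [heq])

theorem not_isRegularEq_of_eq_mul_pow {n p : ℕ} [Fact p.Prime] [NeZero n] {a c : Fin n → ℤ}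
    (hc : ∀ i, ¬(p : ℤ) ∣ c i) (ha : ∀ i, a i = c i * p ^ (i : ℕ)) : ¬IsRegularEq n a n := by
  have hval : ∀ i, padicValInt p (a i) = i := fun i ↦ by
    rw [ha, padicValInt_mul_pow_of_not_dvd (hc i)]
  refine not_isRegularEq_of_padicValInt_injective_mod (p := p) (Nat.pos_of_neZero n)
    (fun i h ↦ ?_) fun i j h ↦ ?_
  · rw [ha] at h
    exact mul_ne_zero (fun hc0 ↦ hc i (by simp [hc0]))
      (pow_ne_zero _ (by exact_mod_cast (Fact.out : p.Prime).ne_zero)) h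
  · rw [hval, hval] at h
    exact Fin.ext (Nat.ModEq.eq_of_lt_of_lt h i.isLt j.isLt)

theorem eq12_not_n_regular_general (p n : ℕ) (hp : p.Prime) (hn : 2 ≤ n)
    (q : Fin (n - 1) → ℕ) (hpq : ∀ i, ¬ p ∣ q i) :
    ¬ IsRegularEq n
      (fun i => if h : (i : ℕ) < n - 1 then (q ⟨i, h⟩ : ℤ) * (p : ℤ) ^ (i : ℕ)
        else -((∑ j, (q j : ℤ) * (p : ℤ) ^ (j : ℕ)) * (p : ℤ) ^ (n - 1)))
      n := by
  have := Fact.mk hp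
  have : NeZero n := ⟨by omega⟩
  have hQ : ¬(p : ℤ) ∣ ∑ j, (q j : ℤ) * (p : ℤ) ^ (j : ℕ) :=
    not_dvd_sum_mul_pow (by omega) (by exact_mod_cast hpq _)
  refine not_isRegularEq_of_eq_mul_pow (p := p)
    (c := fun i ↦ if h : (i : ℕ) < n - 1 then (q ⟨i, h⟩ : ℤ) else -∑ j, (q j : ℤ) * p ^ (j : ℕ))
    (fun i ↦ ?_) fun i ↦ ?_
  all_goals split_ifs with h
  · exact_mod_cast hpq _
  · rwa [dvd_neg]
  · rfl
  · rw [show (i : ℕ) = n - 1 by omega, neg_mul]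

/-- Equation (12) is not `n`-regular: for a prime `p`, `n ≥ 2`, and positive integers
`q₁, …, q_{n−1}` none divisible by `p`, the equation
`q₁x₁ + q₂px₂ + ⋯ + q_{n−1}p^{n−2}x_{n−1} − (q₁ + q₂p + ⋯ + q_{n−1}p^{n−2})p^{n−1}xₙ = 0`
is not `n`-regular. -/
theorem eq12_not_n_regular (p n : ℕ) (hp : p.Prime) (hn : 2 ≤ n)
    (q : Fin (n - 1) → ℕ) (hq : ∀ i, 0 < q i) (hpq : ∀ i, ¬ p ∣ q i) :
    ¬ IsRegularEq n
      (fun i => if h : (i : ℕ) < n - 1 then (q ⟨i, h⟩ : ℤ) * (p : ℤ) ^ (i : ℕ)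
        else -((∑ j, (q j : ℤ) * (p : ℤ) ^ (j : ℕ)) * (p : ℤ) ^ (n - 1)))
      n :=
  eq12_not_n_regular_general p n hp hn q hpq
end

section
/- For every positive integer r, there exist a positive integer n and nonzero integers a₁, …, aₙ such that the linear homogeneous equation a₁x₁ + ⋯ + aₙxₙ = 0 has degree of regularity exactly r: it is r-regular but not (r+1)-regular. (In particular, taking n = r+1, the equation ∑_{i=1}^{n} (−1)^{i−1}2^{i−1}x_i = 0 works.) -/
/-- Total coefficient sum target: `∏_{e=1}^r (2^e - 1)`. -/
def radoM (r : ℕ) : ℤ := ∏ e ∈ Finset.Icc 1 r, ((2:ℤ)^e - 1)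

/-- Partial product skipping `d`. -/
def radoP (r d : ℕ) : ℤ := ∏ e ∈ (Finset.Icc 1 r).erase d, ((2:ℤ)^e - 1)

/-- The coefficients of our equation. -/
def radoC (r i : ℕ) : ℤ :=
  if i = 0 then radoM r - ∑ d ∈ Finset.Icc 1 r, 2^d * radoP r d
  else 2^i * radoP r i

/-- Odd part of the coefficients. -/
def radoB (r i : ℕ) : ℤ := if i = 0 then radoC r 0 else radoP r i

lemma not_two_dvd_radoP (r d : ℕ) : ¬ (2:ℤ) ∣ radoP r d := by
  intro h
  rcases (Int.prime_two.dvd_finset_prod_iff _).1 h with ⟨e, he, hdvd⟩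
  have he1 : 1 ≤ e := (Finset.mem_Icc.1 (Finset.mem_of_mem_erase he)).1
  have h2 : (2:ℤ) ∣ 2^e := dvd_pow_self 2 (by omega)
  have : (2:ℤ) ∣ 1 := by
    have := dvd_sub h2 hdvd
    simpa using this
  norm_num at this

lemma not_two_dvd_radoM (r : ℕ) : ¬ (2:ℤ) ∣ radoM r := by
  intro h
  rcases (Int.prime_two.dvd_finset_prod_iff _).1 h with ⟨e, he, hdvd⟩
  have he1 : 1 ≤ e := (Finset.mem_Icc.1 he).1
  have h2 : (2:ℤ) ∣ 2^e := dvd_pow_self 2 (by omega)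
  have : (2:ℤ) ∣ 1 := by
    have := dvd_sub h2 hdvd
    simpa using this
  norm_num at this

lemma radoC_eq (r i : ℕ) : radoC r i = 2^i * radoB r i := by
  by_cases h : i = 0 <;> simp [radoC, radoB, h]

lemma not_two_dvd_radoB (r i : ℕ) : ¬ (2:ℤ) ∣ radoB r i := by
  unfold radoB
  by_cases h : i = 0
  · simp only [h, if_pos rfl]
    unfold radoC
    simp only [if_pos rfl]
    intro hdvd
    have hsum : (2:ℤ) ∣ ∑ d ∈ Finset.Icc 1 r, 2^d * radoP r d := by
      refine Finset.dvd_sum fun d hd => ?_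
      have hd1 : 1 ≤ d := (Finset.mem_Icc.1 hd).1
      exact Dvd.dvd.mul_right (dvd_pow_self 2 (by omega)) _
    have : (2:ℤ) ∣ radoM r := by
      have := dvd_add hdvd hsum
      simpa using this
    exact not_two_dvd_radoM r this
  · simp only [h, if_neg h]
    exact not_two_dvd_radoP r i

lemma radoC_ne_zero (r i : ℕ) : radoC r i ≠ 0 := by
  intro h
  have := not_two_dvd_radoB r i
  rw [radoC_eq] at h
  have hpow : (2:ℤ)^i ≠ 0 := pow_ne_zero _ (by norm_num)
  rcases mul_eq_zero.1 h with h' | h'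
  · exact hpow h'
  · exact this (h' ▸ dvd_zero 2)

lemma range_succ_eq_insert (r : ℕ) : Finset.range (r+1) = insert 0 (Finset.Icc 1 r) := by
  ext m
  simp only [Finset.mem_range, Finset.mem_insert, Finset.mem_Icc]
  omega

lemma sum_radoC (r : ℕ) : ∑ i ∈ Finset.range (r+1), radoC r i = radoM r := by
  rw [range_succ_eq_insert, Finset.sum_insert (by simp)]
  have h1 : ∑ i ∈ Finset.Icc 1 r, radoC r i = ∑ i ∈ Finset.Icc 1 r, 2^i * radoP r i := by
    refine Finset.sum_congr rfl fun i hi => ?_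
    have : i ≠ 0 := by have := (Finset.mem_Icc.1 hi).1; omega
    simp [radoC, this]
  rw [h1]
  simp [radoC]

lemma radoC_key {r d : ℕ} (hd : d ∈ Finset.Icc 1 r) :
    ((2:ℤ)^d - 1) * radoC r d = 2^d * radoM r := by
  have hdne : d ≠ 0 := by have := (Finset.mem_Icc.1 hd).1; omega
  have : radoC r d = 2^d * radoP r d := by simp [radoC, hdne]
  rw [this, radoM, ← Finset.mul_prod_erase _ _ hd, radoP]
  ring

/-- Rado'"'"'s conjecture: for every positive integer `r` there is a linear homogeneous
equation with degree of regularity exactly `r`, i.e. nonzero integer coefficients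
`a₁, …, aₙ` such that `∑ aᵢxᵢ = 0` is `r`-regular but not `(r+1)`-regular. -/
theorem rado_conjecture (r : ℕ) (hr : 0 < r) :
    ∃ n : ℕ, 0 < n ∧ ∃ a : Fin n → ℤ, (∀ i, a i ≠ 0) ∧
      IsRegularEq n a r ∧ ¬ IsRegularEq n a (r + 1) := by
  refine ⟨r + 1, Nat.succ_pos r, fun i => radoC r (i : ℕ), fun i => radoC_ne_zero r i, ?_, ?_⟩
  · -- r-regularity
    intro C
    -- pigeonhole among colors of 2^0, ..., 2^r
    obtain ⟨j, hj, k, hk, hjk, hCjk⟩ :=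
      Finset.exists_ne_map_eq_of_card_lt_of_maps_to
        (s := Finset.range (r+1)) (t := (Finset.univ : Finset (Fin r)))
        (by simpa using Nat.lt_succ_self r)
        (f := fun m => C (2^m)) (fun m _ => Finset.mem_univ _)
    -- wlog j < k
    wlog hlt : j < k generalizing j k
    · exact this k hk j hj (Ne.symm hjk) hCjk.symm (by omega)
    have hj' : j < r + 1 := Finset.mem_range.1 hj
    have hk' : k < r + 1 := Finset.mem_range.1 hk
    set d := k - j with hd
    have hdIcc : d ∈ Finset.Icc 1 r := Finset.mem_Icc.2 ⟨by omega, by omega⟩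
    have hdlt : d < r + 1 := by omega
    set D : Fin (r+1) := ⟨d, hdlt⟩ with hD
    refine ⟨fun i => if (i : ℕ) = d then 2^j else 2^k, ?_, ?_, ?_⟩
    · intro i
      by_cases h : (i : ℕ) = d <;> simp [h] <;> positivity
    · have key : ∀ i : Fin (r+1), C (if (i : ℕ) = d then 2^j else 2^k) = C (2^k) := by
        intro i
        by_cases h : (i : ℕ) = d
        · simp only [h, if_pos rfl]; exact hCjk
        · simp [h]
      intro i i'
      rw [key i, key i']
    · show (∑ i : Fin (r+1),
          radoC r (i : ℕ) * (((if (i : ℕ) = d then 2^j else 2^k : ℕ) : ℤ))) = 0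
      have hsplit : ∀ i : Fin (r+1),
          radoC r (i : ℕ) * (((if (i : ℕ) = d then 2^j else 2^k : ℕ) : ℤ))
          = radoC r (i : ℕ) * 2^k
            + (if i = D then radoC r d * 2^j - radoC r d * 2^k else 0) := by
        intro i
        by_cases h : i = D
        · have : (i : ℕ) = d := by rw [h]
          simp only [this, if_pos rfl, if_pos h]
          push_cast
          ring
        · have hv : (i : ℕ) ≠ d := by
            intro hc
            exact h (Fin.ext hc)
          simp only [if_neg hv, if_neg h]
          push_cast
          ring
      calc ∑ i : Fin (r+1), radoC r (i : ℕ) * (((if (i : ℕ) = d then 2^j else 2^k : ℕ) : ℤ))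
          = ∑ i : Fin (r+1), (radoC r (i : ℕ) * 2^k
            + (if i = D then radoC r d * 2^j - radoC r d * 2^k else 0)) := by
            exact Finset.sum_congr rfl fun i _ => hsplit i
        _ = (∑ i : Fin (r+1), radoC r (i : ℕ) * 2^k)
            + (radoC r d * 2^j - radoC r d * 2^k) := by
            rw [Finset.sum_add_distrib, Finset.sum_ite_eq' Finset.univ D]
            simp
        _ = radoM r * 2^k + (radoC r d * 2^j - radoC r d * 2^k) := by
            rw [← Finset.sum_mul]
            rw [Fin.sum_univ_eq_sum_range (fun i => radoC r i) (r+1), sum_radoC]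
        _ = 0 := by
            have hkey := radoC_key hdIcc
            have hk2 : (2:ℤ)^k = 2^j * 2^d := by
              rw [← pow_add]
              congr 1
              omega
            rw [hk2]
            linear_combination (-(2:ℤ)^j) * hkey
  · -- not (r+1)-regular
    intro H
    obtain ⟨x, hpos, hmono, hsum⟩ :=
      H (fun m => (⟨(Nat.factorization m) 2 % (r+1), Nat.mod_lt _ (Nat.succ_pos r)⟩ : Fin (r+1)))
    set ν : Fin (r+1) → ℕ := fun i => (Nat.factorization (x i)) 2 with hν
    -- same color means same valuation mod r+1
    have hmod : ∀ i i' : Fin (r+1), ν i % (r+1) = ν i' % (r+1) := by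
      intro i i'
      have := hmono i i'
      simpa using congrArg Fin.val this
    -- decompose x i
    set o : Fin (r+1) → ℕ := fun i => x i / 2 ^ (ν i) with ho
    have hxdec : ∀ i, x i = 2 ^ (ν i) * o i := fun i =>
      (Nat.ordProj_mul_ordCompl_eq_self (x i) 2).symm
    have hodd : ∀ i, ¬ (2:ℤ) ∣ (o i : ℤ) := by
      intro i h
      have : (2:ℕ) ∣ o i := by exact_mod_cast h
      exact Nat.not_dvd_ordCompl Nat.prime_two (hpos i).ne' this
    -- term valuations
    set v : Fin (r+1) → ℕ := fun i => (i : ℕ) + ν i with hv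
    have hterm : ∀ i : Fin (r+1),
        radoC r (i : ℕ) * (x i : ℤ) = 2 ^ (v i) * (radoB r (i : ℕ) * (o i : ℤ)) := by
      intro i
      rw [radoC_eq, hxdec i]
      push_cast
      rw [hv]
      simp only [pow_add]
      ring
    have htermodd : ∀ i : Fin (r+1), ¬ (2:ℤ) ∣ (radoB r (i : ℕ) * (o i : ℤ)) := by
      intro i h
      rcases Int.prime_two.dvd_mul.1 h with h' | h'
      · exact not_two_dvd_radoB r (i : ℕ) h'
      · exact hodd i h'
    -- valuations are pairwise distinct
    have hdist : ∀ i i' : Fin (r+1), (i : ℕ) < (i' : ℕ) → v i ≠ v i' := by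
      intro i i' hlt heq
      have heq' : (i : ℕ) + ν i = (i' : ℕ) + ν i' := heq
      have hle : ν i' ≤ ν i := by omega
      have h2 : (r + 1) ∣ ν i - ν i' := (Nat.modEq_iff_dvd' hle).1 (hmod i' i)
      have h3 : r + 1 ≤ ν i - ν i' := Nat.le_of_dvd (by omega) h2
      have h4 : (i' : ℕ) < r + 1 := i'.isLt
      omega
    -- minimal valuation index
    obtain ⟨i₀, -, hmin⟩ :=
      Finset.exists_min_image (Finset.univ : Finset (Fin (r+1))) v ⟨0, Finset.mem_univ _⟩
    -- every other term is divisible by 2^(v i₀ + 1)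
    have hdvd : ∀ i ∈ Finset.univ.erase i₀, (2:ℤ) ^ (v i₀ + 1) ∣ radoC r (i : ℕ) * (x i : ℤ) := by
      intro i hi
      have hne : i ≠ i₀ := Finset.ne_of_mem_erase hi
      have hvne : v i ≠ v i₀ := by
        rcases Nat.lt_trichotomy (i : ℕ) (i₀ : ℕ) with h | h | h
        · exact hdist i i₀ h
        · exact absurd (Fin.ext h) hne
        · exact fun he => hdist i₀ i h he.symm
      have h1 : v i₀ + 1 ≤ v i := by
        have := hmin i (Finset.mem_univ _)
        omega
      rw [hterm i]
      exact Dvd.dvd.mul_right (pow_dvd_pow 2 h1) _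
    have hsum_erase : (2:ℤ) ^ (v i₀ + 1) ∣ ∑ i ∈ Finset.univ.erase i₀, radoC r (i : ℕ) * (x i : ℤ) :=
      Finset.dvd_sum hdvd
    have heq0 : radoC r (i₀ : ℕ) * (x i₀ : ℤ)
        = - ∑ i ∈ Finset.univ.erase i₀, radoC r (i : ℕ) * (x i : ℤ) := by
      have := Finset.sum_erase_add Finset.univ
        (fun i : Fin (r+1) => radoC r (i : ℕ) * (x i : ℤ)) (Finset.mem_univ i₀)
      rw [hsum] at this
      exact eq_neg_of_add_eq_zero_right this
    have hdvd0 : (2:ℤ) ^ (v i₀ + 1) ∣ radoC r (i₀ : ℕ) * (x i₀ : ℤ) := by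
      rw [heq0]
      exact dvd_neg.mpr hsum_erase
    rw [hterm i₀] at hdvd0
    have h2dvd : (2:ℤ) ∣ radoB r (i₀ : ℕ) * (o i₀ : ℤ) := by
      rcases hdvd0 with ⟨t, ht⟩
      refine ⟨t, ?_⟩
      have hpow : (2:ℤ) ^ (v i₀) ≠ 0 := pow_ne_zero _ (by norm_num)
      refine mul_left_cancel₀ hpow ?_
      rw [ht, pow_succ]
      ring
    exact htermodd i₀ h2dvd
end
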